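/- arXiv:1309.4709 — 4 statements merged into one kernel-verified Lean document; each statement's English description precedes it below -/
import Mathlib

section
/- The Hilbert adjoint of the Douglas–Rachford operator T = T_{V,U} satisfies T* = P_U P_V + P_{U^⊥} P_{V^⊥} = T_{U,V} (the Douglas–Rachford operator with the roles of U and V interchanged); moreover T_{V,U} = T_{V^⊥,U^⊥}. -/
noncomputable section

variable {X : Type*} [NormedAddCommGroup X] [InnerProductSpace ℝ X] [CompleteSpace X]

/-- The orthogonal projection onto a closed subspace `W`, as an operator on `X`. -/
noncomputable def proj (W : Submodule ℝ X) [Submodule.HasOrthogonalProjection W] : X →L[ℝ] X :=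
  W.subtypeL.comp (Submodule.orthogonalProjectionOnto W)

instance infHOP (U V : Submodule ℝ X) [CompleteSpace U] [CompleteSpace V] :
    Submodule.HasOrthogonalProjection (U ⊓ V) := by
  have hU : IsClosed (U : Set X) := (completeSpace_coe_iff_isComplete.mp ‹_›).isClosed
  have hV : IsClosed (V : Set X) := (completeSpace_coe_iff_isComplete.mp ‹_›).isClosed
  have : CompleteSpace (U ⊓ V : Submodule ℝ X) := (hU.inter hV).completeSpace_coe
  infer_instance

/-- The fixed point set `Fix T = {x | T x = x}` of a continuous linear operator `T`,
as a submodule of `X`. -/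
noncomputable def fixedSpace (T : X →L[ℝ] X) : Submodule ℝ X := LinearMap.ker ((T - 1 : X →L[ℝ] X) : X →ₗ[ℝ] X)

instance fixedSpaceHOP (T : X →L[ℝ] X) : Submodule.HasOrthogonalProjection (fixedSpace T) := by
  have h : IsClosed ((fixedSpace T : Submodule ℝ X) : Set X) := by
    have : ((fixedSpace T : Submodule ℝ X) : Set X) = {x | T x = x} := by
      ext x; simp [fixedSpace, LinearMap.mem_ker, sub_eq_zero]
    rw [this]
    exact isClosed_eq T.continuous continuous_id
  have : CompleteSpace (fixedSpace T) := h.completeSpace_coe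
  infer_instance

/-- The reflector `R_W = 2 P_W − Id` associated with `W`. -/
noncomputable def reflector (W : Submodule ℝ X) [Submodule.HasOrthogonalProjection W] : X →L[ℝ] X :=
  2 • proj W - 1

/-- The Douglas–Rachford operator `T = T_{V,U} = P_V (2 P_U − Id) + Id − P_U`.
(The first argument is `U`, the second is `V`.) -/
noncomputable def drOperator (U V : Submodule ℝ X) [Submodule.HasOrthogonalProjection U]
    [Submodule.HasOrthogonalProjection V] : X →L[ℝ] X :=
  proj V * (2 • proj U - 1) + 1 - proj U

/-- The cosine of the Friedrichs angle between `U` and `V`. -/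
noncomputable def friedrichs (U V : Submodule ℝ X) : ℝ :=
  sSup {c : ℝ | ∃ u v : X, u ∈ U ⊓ (U ⊓ V)ᗮ ∧ v ∈ V ⊓ (U ⊓ V)ᗮ ∧
    ‖u‖ ≤ 1 ∧ ‖v‖ ≤ 1 ∧ c = inner ℝ u v}

end

variable {X : Type*} [NormedAddCommGroup X] [InnerProductSpace ℝ X]

section

variable (U V W : Submodule ℝ X) [W.HasOrthogonalProjection] [U.HasOrthogonalProjection]
  [V.HasOrthogonalProjection]

lemma proj_orthogonal : proj Wᗮ = 1 - proj W :=
  W.starProjection_orthogonal'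

lemma drOperator_eq_proj_mul_add_proj_mul :
    drOperator U V = proj V * proj U + proj Vᗮ * proj Uᗮ := by
  rw [drOperator, proj_orthogonal, proj_orthogonal]
  noncomm_ring

lemma drOperator_orthogonal : drOperator Uᗮ Vᗮ = drOperator U V := by
  rw [drOperator, drOperator, proj_orthogonal, proj_orthogonal]
  noncomm_ring

variable [CompleteSpace X]

lemma isSelfAdjoint_proj : IsSelfAdjoint (proj W) :=
  isSelfAdjoint_starProjection W

lemma adjoint_drOperator : ContinuousLinearMap.adjoint (drOperator U V) = drOperator V U := by
  rw [← ContinuousLinearMap.star_eq_adjoint]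
  simp only [drOperator, star_add, star_sub, star_mul, star_nsmul, star_one,
    (isSelfAdjoint_proj U).star_eq, (isSelfAdjoint_proj V).star_eq]
  noncomm_ring

end

variable [CompleteSpace X]

/-- `T* = P_U P_V + P_{U^⊥} P_{V^⊥} = T_{U,V}`, and `T_{V,U} = T_{V^⊥,U^⊥}`.
Here `drOperator U V = T_{V,U}` so that `T_{U,V} = drOperator V U` and
`T_{V^⊥,U^⊥} = drOperator Uᗮ Vᗮ`. -/
theorem drOperator_adjoint
    (U V : Submodule ℝ X) [CompleteSpace U] [CompleteSpace V] :
    ContinuousLinearMap.adjoint (drOperator U V) = proj U * proj V + proj Uᗮ * proj Vᗮ ∧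
    ContinuousLinearMap.adjoint (drOperator U V) = drOperator V U ∧
    drOperator U V = drOperator Uᗮ Vᗮ :=
  ⟨by rw [adjoint_drOperator, drOperator_eq_proj_mul_add_proj_mul], adjoint_drOperator U V,
    (drOperator_orthogonal U V).symm⟩
end

section
/- The Douglas–Rachford operator T is a normal operator, i.e., T T* = T* T. -/
noncomputable section

variable {X : Type*} [NormedAddCommGroup X] [InnerProductSpace ℝ X] [CompleteSpace X]

/-! `T = ½ (Id + R_V R_U)` with reflectors `R_W = 2 P_W − Id`. Each reflector is a self-adjoint
involution, hence unitary, so `R_V R_U` is unitary and therefore normal; normality survives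
adding `Id` and scaling. -/

theorem mul_two_nsmul_sub_one_add_one_sub_eq {𝕜 R : Type*} [Field 𝕜] [CharZero 𝕜] [Ring R]
    [Algebra 𝕜 R] (a b : R) :
    b * (2 • a - 1) + 1 - a = (2⁻¹ : 𝕜) • (1 + (2 • b - 1) * (2 • a - 1)) := by
  noncomm_ring
  module

theorem reflector_mem_unitary (W : Submodule ℝ X) [W.HasOrthogonalProjection] :
    reflector W ∈ unitary (X →L[ℝ] X) := by
  have hP : IsStarProjection (proj W) := isStarProjection_starProjection
  simpa only [reflector, two_nsmul, two_mul] using hP.two_mul_sub_one_mem_unitary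

/-- the Douglas–Rachford operator `T` is normal: `T T* = T* T`. -/
theorem drOperator_normal
    (U V : Submodule ℝ X) [CompleteSpace U] [CompleteSpace V] :
    drOperator U V * ContinuousLinearMap.adjoint (drOperator U V) =
      ContinuousLinearMap.adjoint (drOperator U V) * drOperator U V := by
  have hR : IsStarNormal (reflector V * reflector U) :=
    isStarNormal_of_mem_unitary (mul_mem (reflector_mem_unitary V) (reflector_mem_unitary U))
  have hT : IsStarNormal (drOperator U V) := by
    rw [drOperator, mul_two_nsmul_sub_one_add_one_sub_eq (𝕜 := ℝ)]
    exact IsStarNormal.smul _ (1 + reflector V * reflector U)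
  simpa only [ContinuousLinearMap.star_eq_adjoint] using hT.star_comm_self.symm.eq
end
end

section
/- The fixed point sets of the Douglas–Rachford operator satisfy Fix T = Fix T* = Fix(T* T) = (U ∩ V) ⊕ (U^⊥ ∩ V^⊥), where the sum (U ∩ V) + (U^⊥ ∩ V^⊥) is an orthogonal direct sum (the two summands are orthogonal to each other). -/
noncomputable section

variable {X : Type*} [NormedAddCommGroup X] [InnerProductSpace ℝ X] [CompleteSpace X]

/-!
`2 T - Id = R_V R_U` is a product of two reflections, hence an isometry. Consequently
`T x = x` iff `R_U x = R_V x` iff `P_U x = P_V x`, and a vector whose two projections agree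
splits as `P_U x + (x - P_U x)` with the first summand in `U ∩ V` and the second in
`U^⊥ ∩ V^⊥`. The same isometry makes `T` firmly nonexpansive, `‖T x‖² = ⟪T x, x⟫`. A
contraction and its adjoint have the same fixed points, and for a firmly nonexpansive `T`
the identity `‖T x‖ = ‖x‖`, forced by `T* T x = x`, already gives `T x = x`.
-/

open scoped InnerProductSpace

section Projection

variable {𝕜 E : Type*} [RCLike 𝕜] [NormedAddCommGroup E] [InnerProductSpace 𝕜 E]
  {U V : Submodule 𝕜 E} [U.HasOrthogonalProjection] [V.HasOrthogonalProjection] {x : E}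

theorem Submodule.starProjection_eq_starProjection_iff :
    U.starProjection x = V.starProjection x ↔ x ∈ U ⊓ V ⊔ Uᗮ ⊓ Vᗮ := by
  constructor
  · intro h
    refine Submodule.mem_sup.mpr ⟨U.starProjection x, ⟨U.starProjection_apply_mem x, ?_⟩,
      x - U.starProjection x, ⟨U.sub_starProjection_mem_orthogonal x, ?_⟩, add_sub_cancel _ _⟩
    · exact h ▸ V.starProjection_apply_mem x
    · exact h ▸ V.sub_starProjection_mem_orthogonal x
  · intro hx
    obtain ⟨a, ⟨haU, haV⟩, b, ⟨hbU, hbV⟩, rfl⟩ := Submodule.mem_sup.mp hx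
    rw [eq_starProjection_of_mem_orthogonal' haU hbU rfl,
      eq_starProjection_of_mem_orthogonal' haV hbV rfl]

theorem Submodule.reflection_eq_reflection_iff :
    U.reflection x = V.reflection x ↔ U.starProjection x = V.starProjection x := by
  rw [reflection_apply, reflection_apply, sub_left_inj, ← Nat.cast_smul_eq_nsmul 𝕜,
    ← Nat.cast_smul_eq_nsmul 𝕜]
  exact smul_right_inj two_ne_zero

end Projection

section RealInnerProductSpace

variable {E : Type*} [NormedAddCommGroup E] [InnerProductSpace ℝ E]

theorem real_inner_eq_norm_sq_of_norm_two_smul_sub_eq {x y : E} (h : ‖2 • y - x‖ = ‖x‖) :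
    ⟪y, x⟫_ℝ = ‖y‖ ^ 2 := by
  have h2 := congrArg (· ^ 2) h
  simp only [norm_sub_sq_real, two_smul, norm_add_sq_real, inner_add_left,
    real_inner_self_eq_norm_sq] at h2
  linarith

theorem mem_fixedSpace {T : E →L[ℝ] E} {x : E} : x ∈ fixedSpace T ↔ T x = x := by
  simp [fixedSpace, sub_eq_zero]

theorem proj_eq_starProjection (W : Submodule ℝ E) [W.HasOrthogonalProjection] :
    proj W = W.starProjection :=
  rfl

theorem norm_le_one_of_sq_norm_apply_le_inner {T : E →L[ℝ] E}
    (hT : ∀ x, ‖T x‖ ^ 2 ≤ ⟪T x, x⟫_ℝ) : ‖T‖ ≤ 1 := by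
  refine T.opNorm_le_bound zero_le_one fun x => ?_
  have h := (hT x).trans (real_inner_le_norm _ _)
  nlinarith [norm_nonneg (T x), norm_nonneg x]

end RealInnerProductSpace

section Adjoint

variable {E : Type*} [NormedAddCommGroup E] [InnerProductSpace ℝ E] [CompleteSpace E]
  {T : E →L[ℝ] E}

open ContinuousLinearMap

theorem fixedSpace_le_fixedSpace_adjoint (hT : ‖T‖ ≤ 1) :
    fixedSpace T ≤ fixedSpace (adjoint T) := by
  intro x hx
  rw [mem_fixedSpace] at hx ⊢
  have hle : ‖adjoint T x‖ ≤ ‖x‖ := by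
    simpa using
      (adjoint T).le_of_opNorm_le (c := 1) (by rwa [LinearIsometryEquiv.norm_map]) x
  have hsq : ‖adjoint T x - x‖ ^ 2 ≤ 0 :=
    calc ‖adjoint T x - x‖ ^ 2
      _ = ‖adjoint T x‖ ^ 2 - 2 * ⟪adjoint T x, x⟫_ℝ + ‖x‖ ^ 2 := norm_sub_sq_real _ _
      _ = ‖adjoint T x‖ ^ 2 - ‖x‖ ^ 2 := by
          rw [adjoint_inner_left, hx, real_inner_self_eq_norm_sq]; ring
      _ ≤ 0 := sub_nonpos.mpr (pow_le_pow_left₀ (norm_nonneg _) hle 2)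
  simpa [sub_eq_zero] using hsq

theorem fixedSpace_adjoint_of_norm_le_one (hT : ‖T‖ ≤ 1) :
    fixedSpace (adjoint T) = fixedSpace T := by
  refine le_antisymm ?_ (fixedSpace_le_fixedSpace_adjoint hT)
  simpa using fixedSpace_le_fixedSpace_adjoint (T := adjoint T)
    (by rwa [LinearIsometryEquiv.norm_map])

theorem fixedSpace_adjoint_mul_self (hT : ∀ x, ‖T x‖ ^ 2 ≤ ⟪T x, x⟫_ℝ) :
    fixedSpace (adjoint T * T) = fixedSpace T := by
  refine le_antisymm (fun x hx => ?_) (fun x hx => ?_)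
  · rw [mem_fixedSpace, mul_apply_eq_comp] at hx
    have hnorm : ‖T x‖ ^ 2 = ‖x‖ ^ 2 := by
      rw [← real_inner_self_eq_norm_sq, ← real_inner_self_eq_norm_sq, ← adjoint_inner_left,
        hx]
    have hsq : ‖T x - x‖ ^ 2 ≤ 0 := by
      rw [norm_sub_sq_real]
      linarith [hT x]
    simpa [mem_fixedSpace, sub_eq_zero] using hsq
  · have hx' :=
      (fixedSpace_adjoint_of_norm_le_one (norm_le_one_of_sq_norm_apply_le_inner hT)).ge hx
    rw [mem_fixedSpace] at hx hx' ⊢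
    rw [mul_apply_eq_comp, hx, hx']

end Adjoint

section DouglasRachford

variable {E : Type*} [NormedAddCommGroup E] [InnerProductSpace ℝ E]
  (U V : Submodule ℝ E) [U.HasOrthogonalProjection] [V.HasOrthogonalProjection]

theorem two_smul_drOperator_apply_sub (x : E) :
    2 • drOperator U V x - x = V.reflection (U.reflection x) := by
  simp only [drOperator, proj_eq_starProjection, nsmul_eq_mul, Nat.cast_ofNat, sub_apply,
    add_apply, mul_apply_eq_comp, ContinuousLinearMap.ofNat_apply, one_apply_eq_self, map_sub,
    ContinuousLinearMap.map_smul_of_tower, Submodule.reflection_apply]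
  module

theorem norm_drOperator_apply_sq (x : E) :
    ‖drOperator U V x‖ ^ 2 = ⟪drOperator U V x, x⟫_ℝ := by
  refine (real_inner_eq_norm_sq_of_norm_two_smul_sub_eq ?_).symm
  rw [two_smul_drOperator_apply_sub, LinearIsometryEquiv.norm_map, LinearIsometryEquiv.norm_map]

theorem fixedSpace_drOperator : fixedSpace (drOperator U V) = U ⊓ V ⊔ Uᗮ ⊓ Vᗮ := by
  ext x
  rw [mem_fixedSpace, ← Submodule.starProjection_eq_starProjection_iff,
    ← Submodule.reflection_eq_reflection_iff]
  calc drOperator U V x = x ↔ 2 • drOperator U V x - x = x := by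
        rw [sub_eq_iff_eq_add, ← two_nsmul, ← Nat.cast_smul_eq_nsmul ℝ,
          ← Nat.cast_smul_eq_nsmul ℝ, Nat.cast_ofNat, smul_right_inj two_ne_zero]
    _ ↔ U.reflection x = V.reflection x := by
        rw [two_smul_drOperator_apply_sub, ← LinearIsometryEquiv.eq_symm_apply,
          Submodule.reflection_symm]

end DouglasRachford

/-- `Fix T = Fix T* = Fix(T* T) = (U ∩ V) ⊕ (U^⊥ ∩ V^⊥)`, where the sum
`(U ∩ V) + (U^⊥ ∩ V^⊥)` is an orthogonal direct sum. -/
theorem drOperator_fixedSpace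
    (U V : Submodule ℝ X) [CompleteSpace U] [CompleteSpace V] :
    fixedSpace (drOperator U V) = fixedSpace (ContinuousLinearMap.adjoint (drOperator U V)) ∧
    fixedSpace (drOperator U V) =
      fixedSpace (ContinuousLinearMap.adjoint (drOperator U V) * drOperator U V) ∧
    fixedSpace (drOperator U V) = (U ⊓ V) ⊔ (Uᗮ ⊓ Vᗮ) ∧
    (∀ x ∈ U ⊓ V, ∀ y ∈ Uᗮ ⊓ Vᗮ, (inner ℝ x y : ℝ) = 0) := by
  have hfirm : ∀ x, ‖drOperator U V x‖ ^ 2 ≤ ⟪drOperator U V x, x⟫_ℝ :=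
    fun x => (norm_drOperator_apply_sq U V x).le
  exact ⟨(fixedSpace_adjoint_of_norm_le_one (norm_le_one_of_sq_norm_apply_le_inner hfirm)).symm,
    (fixedSpace_adjoint_mul_self hfirm).symm, fixedSpace_drOperator U V,
    fun x hx y hy => Submodule.inner_right_of_mem_orthogonal hx.1 hy.1⟩
end
end

section
/- For every natural number n, the Douglas–Rachford operator T satisfies P_U P_{Fix T} = P_V P_{Fix T} = P_{U∩V} P_{Fix T} = P_{U∩V} = P_{U∩V} P_{Fix T} T^n = P_{U∩V} T^n. -/
noncomputable section

variable {X : Type*} [NormedAddCommGroup X] [InnerProductSpace ℝ X] [CompleteSpace X]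

/-! A fixed point `x` of `T` satisfies `P_V (2 P_U x - x) = P_U x`, which puts `P_U x` in `V` and
then gives `P_U x = P_V x ∈ U ∩ V`. Conversely `U ∩ V ⊆ Fix T`, so `P_{U∩V} P_{Fix T} = P_{U∩V}`.
Finally `P_{U∩V} T = P_{U∩V}`, because `P_{U∩V}` absorbs both `P_U` and `P_V` on the right. -/

open Submodule

section Projections

omit [CompleteSpace X]

theorem proj_mul_proj_of_le {W F : Submodule ℝ X} [W.HasOrthogonalProjection]
    [F.HasOrthogonalProjection] (h : W ≤ F) : proj W * proj F = proj W :=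
  starProjection_comp_starProjection_of_le h

theorem proj_apply_of_mem {W : Submodule ℝ X} [W.HasOrthogonalProjection] {x : X} (hx : x ∈ W) :
    proj W x = x :=
  starProjection_eq_self_iff.mpr hx

theorem proj_apply_mem (W : Submodule ℝ X) [W.HasOrthogonalProjection] (x : X) :
    proj W x ∈ W :=
  starProjection_apply_mem W x

theorem mem_fixedSpace_iff {T : X →L[ℝ] X} {x : X} : x ∈ fixedSpace T ↔ T x = x := by
  simp [fixedSpace, sub_eq_zero]

theorem drOperator_apply (U V : Submodule ℝ X) [U.HasOrthogonalProjection]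
    [V.HasOrthogonalProjection] (x : X) :
    drOperator U V x = proj V (2 • proj U x - x) + x - proj U x :=
  rfl

theorem proj_eq_proj_of_mem_fixedSpace_drOperator {U V : Submodule ℝ X}
    [U.HasOrthogonalProjection] [V.HasOrthogonalProjection] {x : X}
    (hx : x ∈ fixedSpace (drOperator U V)) : proj U x = proj V x := by
  rw [mem_fixedSpace_iff, drOperator_apply] at hx
  have hreflect : proj V (2 • proj U x - x) = proj U x := by
    linear_combination (norm := module) hx
  have hUV : proj V (proj U x) = proj U x := proj_apply_of_mem (hreflect ▸ proj_apply_mem V _)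
  rw [map_sub, map_nsmul, hUV] at hreflect
  linear_combination (norm := module) hreflect

theorem inf_le_fixedSpace_drOperator (U V : Submodule ℝ X) [U.HasOrthogonalProjection]
    [V.HasOrthogonalProjection] : U ⊓ V ≤ fixedSpace (drOperator U V) := by
  intro x hx
  rw [mem_fixedSpace_iff, drOperator_apply, proj_apply_of_mem hx.1, two_nsmul,
    add_sub_cancel_right, add_sub_cancel_right, proj_apply_of_mem hx.2]

end Projections

theorem mul_pow_eq_self_of_mul_eq_self {M : Type*} [Monoid M] {a t : M} (h : a * t = a) (n : ℕ) :
    a * t ^ n = a := by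
  induction n with
  | zero => rw [pow_zero, mul_one]
  | succ n ih => rw [pow_succ, ← mul_assoc, ih, h]

section FixedSpace

variable (U V : Submodule ℝ X) [CompleteSpace U] [CompleteSpace V]

theorem proj_inf_mul_drOperator :
    proj (U ⊓ V) * drOperator U V = proj (U ⊓ V) := by
  have hU : proj (U ⊓ V) * proj U = proj (U ⊓ V) := proj_mul_proj_of_le inf_le_left
  have hV : proj (U ⊓ V) * proj V = proj (U ⊓ V) := proj_mul_proj_of_le inf_le_right
  rw [drOperator, mul_sub, mul_add, ← mul_assoc, hV, mul_sub, mul_smul_comm, hU, mul_one]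
  abel

theorem proj_mul_proj_fixedSpace_drOperator_eq_right :
    proj U * proj (fixedSpace (drOperator U V)) = proj V * proj (fixedSpace (drOperator U V)) :=
  ContinuousLinearMap.ext fun x ↦
    proj_eq_proj_of_mem_fixedSpace_drOperator (proj_apply_mem (fixedSpace (drOperator U V)) x)

theorem proj_inf_mul_proj_fixedSpace_drOperator :
    proj (U ⊓ V) * proj (fixedSpace (drOperator U V)) = proj (U ⊓ V) :=
  proj_mul_proj_of_le (inf_le_fixedSpace_drOperator U V)

theorem proj_inf_mul_proj_fixedSpace_drOperator_eq_left :
    proj (U ⊓ V) * proj (fixedSpace (drOperator U V)) =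
      proj U * proj (fixedSpace (drOperator U V)) := by
  ext x
  set y := proj (fixedSpace (drOperator U V)) x
  have hUV : proj U y = proj V y :=
    proj_eq_proj_of_mem_fixedSpace_drOperator (proj_apply_mem (fixedSpace (drOperator U V)) x)
  have hy : proj U y ∈ U ⊓ V := ⟨proj_apply_mem U y, hUV ▸ proj_apply_mem V y⟩
  calc proj (U ⊓ V) y = proj (U ⊓ V) (proj U y) :=
        (DFunLike.congr_fun (proj_mul_proj_of_le inf_le_left) y).symm
    _ = proj U y := proj_apply_of_mem hy

end FixedSpace

/-- for every natural number `n`,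
`P_U P_{Fix T} = P_V P_{Fix T} = P_{U∩V} P_{Fix T} = P_{U∩V} = P_{U∩V} P_{Fix T} T^n
= P_{U∩V} T^n`. -/
theorem proj_inter_drOperator_powers
    (U V : Submodule ℝ X) [CompleteSpace U] [CompleteSpace V] (n : ℕ) :
    proj U * proj (fixedSpace (drOperator U V)) = proj V * proj (fixedSpace (drOperator U V)) ∧
    proj V * proj (fixedSpace (drOperator U V)) =
      proj (U ⊓ V) * proj (fixedSpace (drOperator U V)) ∧
    proj (U ⊓ V) * proj (fixedSpace (drOperator U V)) = proj (U ⊓ V) ∧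
    proj (U ⊓ V) = proj (U ⊓ V) * proj (fixedSpace (drOperator U V)) * (drOperator U V) ^ n ∧
    proj (U ⊓ V) * proj (fixedSpace (drOperator U V)) * (drOperator U V) ^ n =
      proj (U ⊓ V) * (drOperator U V) ^ n := by
  have hUV := proj_mul_proj_fixedSpace_drOperator_eq_right U V
  have hinf := proj_inf_mul_proj_fixedSpace_drOperator U V
  refine ⟨hUV, ?_, hinf, ?_, by rw [hinf]⟩
  · rw [← hUV, proj_inf_mul_proj_fixedSpace_drOperator_eq_left]
  · rw [hinf, mul_pow_eq_self_of_mul_eq_self (proj_inf_mul_drOperator U V)]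
end
end
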